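/- arXiv:2405.04811 — 8 statements merged into one kernel-verified Lean document; each statement's English description precedes it below -/
import Mathlib

section
/- Let A ∈ ℝ^{m×n} with singular value decomposition A = U Σ Vᵀ, let C ∈ ℝ^{n×n} be symmetric positive semi-definite, and set K^(g) = A C Aᵀ. For any integer k ≤ rank(A) such that V_kᵀ C V_k is nonsingular, the coefficient τ_k satisfies τ_k(K^(g)) = ‖Σ̄_k · tanmat(V_k, C V_k)‖_F / ‖Σ̄_k‖_F. -/
open MeasureTheory ProbabilityTheory Matrix

/-- Frobenius norm of a real matrix. -/
noncomputable def frob {α β : Type*} [Fintype α] [Fintype β] (M : Matrix α β ℝ) : ℝ :=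
  Real.sqrt (∑ i, ∑ j, M i j ^ 2)

/-- Orthogonal projection `π(M) = M M⁺` onto the range of a full column rank matrix `M`,
via the explicit formula `M (Mᵀ M)⁻¹ Mᵀ` for the Moore-Penrose inverse. -/
noncomputable def proj {α β : Type*} [Fintype α] [Fintype β] [DecidableEq β]
    (M : Matrix α β ℝ) : Matrix α α ℝ :=
  M * (Mᵀ * M)⁻¹ * Mᵀ

/-- Moore-Penrose inverse `M⁺ = Mᵀ (M Mᵀ)⁻¹` of a full row rank matrix `M`. -/
noncomputable def rpinv {α β : Type*} [Fintype α] [Fintype β] [DecidableEq α]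
    (M : Matrix α β ℝ) : Matrix β α ℝ :=
  Mᵀ * (M * Mᵀ)⁻¹

/-- `X : Ω → ι → ℝ` is a centered Gaussian vector with covariance matrix `K`:
every linear functional `⟨a, X⟩` is a real Gaussian with mean `0` and variance `aᵀ K a`. -/
def IsCenteredGaussian {Ω : Type*} [MeasurableSpace Ω] (μ : Measure Ω)
    {ι : Type*} [Fintype ι] (X : Ω → ι → ℝ) (K : Matrix ι ι ℝ) : Prop :=
  ∀ a : ι → ℝ,
    μ.map (fun ω => ∑ i, a i * X ω i) =
      gaussianReal 0 (Real.toNNReal (∑ i, ∑ j, a i * K i j * a j))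

theorem stmt_4
    (k m' n' : ℕ)
    (U : Matrix (Fin k ⊕ Fin m') (Fin k ⊕ Fin m') ℝ)
    (V : Matrix (Fin k ⊕ Fin n') (Fin k ⊕ Fin n') ℝ)
    (σ : ℕ → ℝ)
    (hU : Uᵀ * U = 1) (hV : Vᵀ * V = 1)
    (hσmono : ∀ i j : ℕ, i ≤ j → σ j ≤ σ i) (hσnn : ∀ i, 0 ≤ σ i)
    (Sk : Matrix (Fin k) (Fin k) ℝ)
    (hSk : Sk = Matrix.diagonal fun i : Fin k => σ ((i : ℕ) + 1))
    (Sb : Matrix (Fin m') (Fin n') ℝ)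
    (hSb : Sb = Matrix.of fun (i : Fin m') (j : Fin n') => if (i : ℕ) = (j : ℕ) then σ (k + (i : ℕ) + 1) else 0)
    (A : Matrix (Fin k ⊕ Fin m') (Fin k ⊕ Fin n') ℝ)
    (hA : A = U * Matrix.fromBlocks Sk 0 0 Sb * Vᵀ)
    (Uk : Matrix (Fin k ⊕ Fin m') (Fin k) ℝ) (hUk : Uk = U.submatrix id Sum.inl)
    (Ub : Matrix (Fin k ⊕ Fin m') (Fin m') ℝ) (hUb : Ub = U.submatrix id Sum.inr)
    (Vk : Matrix (Fin k ⊕ Fin n') (Fin k) ℝ) (hVk : Vk = V.submatrix id Sum.inl)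
    (Vb : Matrix (Fin k ⊕ Fin n') (Fin n') ℝ) (hVb : Vb = V.submatrix id Sum.inr)
    (C : Matrix (Fin k ⊕ Fin n') (Fin k ⊕ Fin n') ℝ) (hC : C.PosSemidef)
    (hk : k ≤ A.rank) (hCVk : IsUnit (Vkᵀ * C * Vk).det) :
    frob (Ubᵀ * ((A * C * Aᵀ) * Uk) * (Ukᵀ * (A * C * Aᵀ) * Uk)⁻¹ * Sk) / frob Sb =
      frob (Sb * (Vbᵀ * (C * Vk) * (Vkᵀ * C * Vk)⁻¹)) / frob Sb := by
  classical
  -- Step 1: all singular values σ(1),…,σ(k) are nonzero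
  have hσpos : ∀ i : Fin k, σ ((i : ℕ) + 1) ≠ 0 := by
    intro i hzero
    have hz : ∀ j : ℕ, (i : ℕ) + 1 ≤ j → σ j = 0 := fun j hj =>
      le_antisymm (hzero ▸ hσmono _ _ hj) (hσnn j)
    set D : Matrix (Fin k ⊕ Fin m') (Fin k ⊕ Fin n') ℝ := Matrix.fromBlocks Sk 0 0 Sb with hD
    have hDcol : ∀ (r : Fin k ⊕ Fin m') (c : Fin k ⊕ Fin n'),
        (∀ j : Fin k, c = Sum.inl j → (i : ℕ) ≤ (j : ℕ)) → D r c = 0 := by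
      rintro r (c | c) hc
      · have hic : (i : ℕ) ≤ (c : ℕ) := hc c rfl
        rcases r with r | r
        · simp only [hD, Matrix.fromBlocks_apply₁₁, hSk, Matrix.diagonal_apply]
          split
          · next h => exact hz _ (by omega)
          · rfl
        · simp [hD]
      · rcases r with r | r
        · simp [hD]
        · simp only [hD, Matrix.fromBlocks_apply₂₂, hSb, Matrix.of_apply]
          split
          · exact hz _ (by omega)
          · rfl
    set W : Matrix (Fin k ⊕ Fin m') (Fin k ⊕ Fin n') ℝ := U * D with hW
    have hWcol : ∀ (p : Fin k ⊕ Fin m') (c : Fin k ⊕ Fin n'),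
        (∀ j : Fin k, c = Sum.inl j → (i : ℕ) ≤ (j : ℕ)) → W p c = 0 := by
      intro p c hc
      simp only [hW, Matrix.mul_apply]
      exact Finset.sum_eq_zero fun r _ => by rw [hDcol r c hc, mul_zero]
    set X : Matrix (Fin k ⊕ Fin m') (Fin (i : ℕ)) ℝ :=
      Matrix.of fun p t => W p (Sum.inl (Fin.castLE i.isLt.le t)) with hX
    set Y : Matrix (Fin (i : ℕ)) (Fin k ⊕ Fin n') ℝ :=
      Matrix.of fun t q => Vᵀ (Sum.inl (Fin.castLE i.isLt.le t)) q with hY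
    have hfact : A = X * Y := by
      have hAW : A = W * Vᵀ := by rw [hA, hW, hD]
      rw [hAW]
      ext p q
      simp only [Matrix.mul_apply, hX, hY, Matrix.of_apply]
      rw [Fintype.sum_sum_type]
      have h2 : ∑ c : Fin n', W p (Sum.inr c) * Vᵀ (Sum.inr c) q = 0 :=
        Finset.sum_eq_zero fun c _ => by
          rw [hWcol p (Sum.inr c) (by rintro j ⟨⟩), zero_mul]
      rw [h2, add_zero]
      have hm : (∑ x : Fin (i : ℕ), W p (Sum.inl (Fin.castLE i.isLt.le x)) *
            Vᵀ (Sum.inl (Fin.castLE i.isLt.le x)) q)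
          = ∑ j ∈ Finset.univ.map (Fin.castLEEmb i.isLt.le),
              W p (Sum.inl j) * Vᵀ (Sum.inl j) q := by
        rw [Finset.sum_map]; rfl
      rw [hm]
      refine (Finset.sum_subset (Finset.subset_univ _) ?_).symm
      intro j _ hj
      have hij : (i : ℕ) ≤ (j : ℕ) := by
        by_contra hlt
        push_neg at hlt
        exact hj (Finset.mem_map.mpr ⟨⟨(j : ℕ), hlt⟩, Finset.mem_univ _, by ext; simp⟩)
      rw [hWcol p (Sum.inl j) (by intro j' hjj; obtain rfl : j = j' := Sum.inl_injective hjj; exact hij), zero_mul]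
    have hrank : A.rank ≤ (i : ℕ) := by
      calc A.rank = (X * Y).rank := by rw [hfact]
        _ ≤ X.rank := Matrix.rank_mul_le_left X Y
        _ ≤ Fintype.card (Fin (i : ℕ)) := Matrix.rank_le_card_width X
        _ = (i : ℕ) := Fintype.card_fin _
    have := i.isLt
    omega
  -- Step 2: Sk is invertible
  have hSkdet : IsUnit Sk.det := by
    rw [hSk, Matrix.det_diagonal]
    exact isUnit_iff_ne_zero.2 (Finset.prod_ne_zero_iff.2 fun i _ => hσpos i)
  -- Step 3: block identities
  have hUfc : U = Matrix.fromCols Uk Ub := by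
    ext p q; cases q <;> simp [hUk, hUb, Matrix.fromCols]
  have hVfc : V = Matrix.fromCols Vk Vb := by
    ext p q; cases q <;> simp [hVk, hVb, Matrix.fromCols]
  have hUA : Matrix.fromRows (Ukᵀ * A) (Ubᵀ * A) =
      Matrix.fromRows (Sk * Vkᵀ) (Sb * Vbᵀ) := by
    rw [← Matrix.fromRows_mul]
    have h1 : Matrix.fromRows Ukᵀ Ubᵀ = Uᵀ := by
      rw [hUfc, Matrix.transpose_fromCols]
    rw [h1, hA, ← Matrix.mul_assoc, ← Matrix.mul_assoc, hU, Matrix.one_mul]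
    rw [hVfc, Matrix.transpose_fromCols, Matrix.fromBlocks_mul_fromRows]
    simp
  obtain ⟨h1, h2⟩ := Matrix.fromRows_inj.eq_iff.mp hUA
  have hSkT : Skᵀ = Sk := by rw [hSk]; exact Matrix.diagonal_transpose _
  have h3 : Aᵀ * Uk = Vk * Sk := by
    have := congrArg Matrix.transpose h1
    rwa [Matrix.transpose_mul, Matrix.transpose_mul, Matrix.transpose_transpose,
      Matrix.transpose_transpose, hSkT] at this
  -- Step 4: rewrite both matrix products
  have e1 : Ubᵀ * ((A * C * Aᵀ) * Uk) = Sb * (Vbᵀ * (C * Vk)) * Sk := by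
    calc Ubᵀ * ((A * C * Aᵀ) * Uk) = (Ubᵀ * A) * C * (Aᵀ * Uk) := by
          simp only [Matrix.mul_assoc]
      _ = Sb * Vbᵀ * C * (Vk * Sk) := by rw [h2, h3]
      _ = Sb * (Vbᵀ * (C * Vk)) * Sk := by simp only [Matrix.mul_assoc]
  have e2 : Ukᵀ * (A * C * Aᵀ) * Uk = Sk * (Vkᵀ * C * Vk) * Sk := by
    calc Ukᵀ * (A * C * Aᵀ) * Uk = (Ukᵀ * A) * C * (Aᵀ * Uk) := by
          simp only [Matrix.mul_assoc]
      _ = Sk * Vkᵀ * C * (Vk * Sk) := by rw [h1, h3]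
      _ = Sk * (Vkᵀ * C * Vk) * Sk := by simp only [Matrix.mul_assoc]
  have e3 : (Sk * (Vkᵀ * C * Vk) * Sk)⁻¹ = Sk⁻¹ * ((Vkᵀ * C * Vk)⁻¹ * Sk⁻¹) := by
    rw [Matrix.mul_inv_rev, Matrix.mul_inv_rev]
  have key : Ubᵀ * ((A * C * Aᵀ) * Uk) * (Ukᵀ * (A * C * Aᵀ) * Uk)⁻¹ * Sk =
      Sb * (Vbᵀ * (C * Vk) * (Vkᵀ * C * Vk)⁻¹) := by
    rw [e1, e2, e3]
    rw [Matrix.mul_assoc (Sb * (Vbᵀ * (C * Vk))) Sk,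
      Matrix.mul_nonsing_inv_cancel_left Sk _ hSkdet]
    rw [← Matrix.mul_assoc (Sb * (Vbᵀ * (C * Vk))) (Vkᵀ * C * Vk)⁻¹ Sk⁻¹,
      Matrix.nonsing_inv_mul_cancel_right _ _ hSkdet, Matrix.mul_assoc]
  rw [key]
end

section
/- Let A ∈ ℝ^{m×n} with singular value decomposition A = U Σ Vᵀ, let C ∈ ℝ^{n×n} be symmetric positive semi-definite, and set K^(g) = A C Aᵀ. For any integer k ≤ rank(A) such that V_kᵀ C V_k is nonsingular, the coefficient ρ_k satisfies ρ_k(K^(g)) = ‖(I_n − π(C^{1/2} V_k)) C^{1/2} Aᵀ‖_F · √(tr((V_kᵀ C V_k)⁻¹)) / ‖Σ̄_k‖_F. -/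
open MeasureTheory ProbabilityTheory Matrix

/-- The positive semidefinite square root of a positive semidefinite matrix
(the former Mathlib definition `Matrix.PosSemidef.sqrt`, removed since). -/
noncomputable def psdSqrt {n : Type*} [Fintype n] [DecidableEq n]
    {A : Matrix n n ℝ} (hA : A.PosSemidef) : Matrix n n ℝ :=
  hA.1.eigenvectorUnitary.1 * diagonal ((RCLike.ofReal : ℝ → ℝ) ∘ (Real.sqrt ∘ hA.1.eigenvalues)) *
  (star hA.1.eigenvectorUnitary : Matrix n n ℝ)

lemma psdSqrt_transpose {n : Type*} [Fintype n] [DecidableEq n]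
    {A : Matrix n n ℝ} (hA : A.PosSemidef) : (psdSqrt hA)ᵀ = psdSqrt hA := by
  rw [← Matrix.conjTranspose_eq_transpose_of_trivial]
  unfold psdSqrt
  rw [conjTranspose_mul, conjTranspose_mul, diagonal_conjTranspose,
    ← Matrix.star_eq_conjTranspose, ← Matrix.star_eq_conjTranspose, star_star, Matrix.mul_assoc]
  congr 2

lemma psdSqrt_mul_self {n : Type*} [Fintype n] [DecidableEq n]
    {A : Matrix n n ℝ} (hA : A.PosSemidef) : psdSqrt hA * psdSqrt hA = A := by
  unfold psdSqrt
  conv_rhs => rw [hA.1.spectral_theorem, Unitary.conjStarAlgAut_apply]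
  have h := Unitary.coe_star_mul_self hA.1.eigenvectorUnitary
  calc _ = (hA.1.eigenvectorUnitary : Matrix n n ℝ) *
        (diagonal ((RCLike.ofReal : ℝ → ℝ) ∘ (Real.sqrt ∘ hA.1.eigenvalues)) *
        ((star hA.1.eigenvectorUnitary : Matrix n n ℝ) * hA.1.eigenvectorUnitary) *
        diagonal ((RCLike.ofReal : ℝ → ℝ) ∘ (Real.sqrt ∘ hA.1.eigenvalues))) *
        (star hA.1.eigenvectorUnitary : Matrix n n ℝ) := by
          simp only [Matrix.mul_assoc]
    _ = _ := by
          rw [h, Matrix.mul_one, diagonal_mul_diagonal]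
          congr 2
          congr 1
          funext i
          simp [Real.mul_self_sqrt (hA.eigenvalues_nonneg i)]

lemma frob_eq_sqrt_trace {α β : Type*} [Fintype α] [Fintype β] (M : Matrix α β ℝ) :
    frob M = Real.sqrt (Mᵀ * M).trace := by
  unfold frob
  congr 1
  rw [Matrix.trace, Finset.sum_comm]
  simp [Matrix.mul_apply, Matrix.diag, pow_two]

lemma proj_transpose {α β : Type*} [Fintype α] [Fintype β] [DecidableEq β]
    (N : Matrix α β ℝ) : (proj N)ᵀ = proj N := by
  unfold proj
  simp only [transpose_mul, transpose_transpose, Matrix.transpose_nonsing_inv,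
    Matrix.mul_assoc]

lemma proj_idem {α β : Type*} [Fintype α] [Fintype β] [DecidableEq β]
    (N : Matrix α β ℝ) (h : IsUnit (Nᵀ * N).det) : proj N * proj N = proj N := by
  unfold proj
  calc N * (Nᵀ * N)⁻¹ * Nᵀ * (N * (Nᵀ * N)⁻¹ * Nᵀ)
      = N * ((Nᵀ * N)⁻¹ * ((Nᵀ * N) * ((Nᵀ * N)⁻¹ * Nᵀ))) := by
        simp only [Matrix.mul_assoc]
    _ = N * (Nᵀ * N)⁻¹ * Nᵀ := by
        rw [← Matrix.mul_assoc (Nᵀ * N), Matrix.mul_nonsing_inv _ h, Matrix.one_mul,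
          Matrix.mul_assoc]

lemma proj_trace {α β γ : Type*} [Fintype α] [Fintype β] [Fintype γ]
    [DecidableEq α] [DecidableEq β]
    (N : Matrix α β ℝ) (h : IsUnit (Nᵀ * N).det) (W : Matrix α γ ℝ) :
    (((1 - proj N) * W)ᵀ * ((1 - proj N) * W)).trace
      = (Wᵀ * W).trace - ((Wᵀ * N) * (Nᵀ * N)⁻¹ * (Nᵀ * W)).trace := by
  have h1 : (1 - proj N)ᵀ * (1 - proj N) = 1 - proj N := by
    rw [transpose_sub, transpose_one, proj_transpose, Matrix.sub_mul, Matrix.one_mul,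
      Matrix.mul_sub, Matrix.mul_one, proj_idem N h, sub_self, sub_zero]
  have h2 : ((1 - proj N) * W)ᵀ * ((1 - proj N) * W)
      = Wᵀ * W - (Wᵀ * N) * (Nᵀ * N)⁻¹ * (Nᵀ * W) := by
    rw [transpose_mul, Matrix.mul_assoc Wᵀ, ← Matrix.mul_assoc (1 - proj N)ᵀ, h1,
      Matrix.sub_mul, Matrix.one_mul, Matrix.mul_sub]
    congr 1
    unfold proj
    simp only [Matrix.mul_assoc]
  rw [h2, Matrix.trace_sub]

theorem stmt_5
    (k m' n' : ℕ)
    (U : Matrix (Fin k ⊕ Fin m') (Fin k ⊕ Fin m') ℝ)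
    (V : Matrix (Fin k ⊕ Fin n') (Fin k ⊕ Fin n') ℝ)
    (σ : ℕ → ℝ)
    (hU : Uᵀ * U = 1) (hV : Vᵀ * V = 1)
    (hσmono : ∀ i j : ℕ, i ≤ j → σ j ≤ σ i) (hσnn : ∀ i, 0 ≤ σ i)
    (Sk : Matrix (Fin k) (Fin k) ℝ)
    (hSk : Sk = Matrix.diagonal fun i : Fin k => σ ((i : ℕ) + 1))
    (Sb : Matrix (Fin m') (Fin n') ℝ)
    (hSb : Sb = Matrix.of fun (i : Fin m') (j : Fin n') => if (i : ℕ) = (j : ℕ) then σ (k + (i : ℕ) + 1) else 0)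
    (A : Matrix (Fin k ⊕ Fin m') (Fin k ⊕ Fin n') ℝ)
    (hA : A = U * Matrix.fromBlocks Sk 0 0 Sb * Vᵀ)
    (Uk : Matrix (Fin k ⊕ Fin m') (Fin k) ℝ) (hUk : Uk = U.submatrix id Sum.inl)
    (Ub : Matrix (Fin k ⊕ Fin m') (Fin m') ℝ) (hUb : Ub = U.submatrix id Sum.inr)
    (Vk : Matrix (Fin k ⊕ Fin n') (Fin k) ℝ) (hVk : Vk = V.submatrix id Sum.inl)
    (Vb : Matrix (Fin k ⊕ Fin n') (Fin n') ℝ) (hVb : Vb = V.submatrix id Sum.inr)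
    (C : Matrix (Fin k ⊕ Fin n') (Fin k ⊕ Fin n') ℝ) (hC : C.PosSemidef)
    (Kg : Matrix (Fin k ⊕ Fin m') (Fin k ⊕ Fin m') ℝ) (hKg : Kg = A * C * Aᵀ)
    (hKgpsd : Kg.PosSemidef)
    (hk : k ≤ A.rank) (hCVk : IsUnit (Vkᵀ * C * Vk).det) :
    frob ((1 - proj (psdSqrt hKgpsd * Uk)) * psdSqrt hKgpsd) *
        Real.sqrt (Sk * Sk * (Ukᵀ * Kg * Uk)⁻¹).trace / frob Sb =
      frob ((1 - proj (psdSqrt hC * Vk)) * (psdSqrt hC * Aᵀ)) *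
        Real.sqrt ((Vkᵀ * C * Vk)⁻¹).trace / frob Sb := by
  classical
  have hCt : Cᵀ = C := by
    rw [← Matrix.conjTranspose_eq_transpose_of_trivial]; exact hC.1
  have hKgt : Kgᵀ = Kg := by
    rw [← Matrix.conjTranspose_eq_transpose_of_trivial]; exact hKgpsd.1
  have hSkt : Skᵀ = Sk := by rw [hSk, Matrix.diagonal_transpose]
  -- selection matrices
  set E₁ : Matrix (Fin k ⊕ Fin m') (Fin k) ℝ :=
    Matrix.of (fun a b => if a = Sum.inl b then (1:ℝ) else 0) with hE₁
  set E₂ : Matrix (Fin k ⊕ Fin n') (Fin k) ℝ :=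
    Matrix.of (fun a b => if a = Sum.inl b then (1:ℝ) else 0) with hE₂
  have hUkE : Uk = U * E₁ := by
    rw [hUk]; ext a b
    simp [Matrix.mul_apply, hE₁]
  have hVkE : Vk = V * E₂ := by
    rw [hVk]; ext a b
    simp [Matrix.mul_apply, hE₂]
  have hSE : (Matrix.fromBlocks Sk 0 0 Sb)ᵀ * E₁ = E₂ * Sk := by
    ext a b
    rw [Matrix.mul_apply, Matrix.mul_apply]
    cases a with
    | inl i =>
      simp only [hE₁, hE₂, Matrix.of_apply, mul_ite, mul_one, mul_zero, ite_mul, one_mul,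
        zero_mul, Finset.sum_ite_eq, Finset.sum_ite_eq', Finset.mem_univ, if_true,
        Matrix.transpose_apply, Matrix.fromBlocks_apply₁₁]
      rw [hSk]
      simp only [Matrix.diagonal_apply]
      by_cases hib : b = i
      · simp [hib]
      · have hbi : ¬ i = b := fun h => hib h.symm
        simp [hib, hbi]
    | inr i =>
      simp [hE₁, hE₂, Matrix.transpose_apply]
  have hUtU : ∀ X : Matrix (Fin k ⊕ Fin m') (Fin k) ℝ, Uᵀ * (U * X) = X := by
    intro X; rw [← Matrix.mul_assoc, hU, Matrix.one_mul]
  have hAtUk : Aᵀ * Uk = Vk * Sk := by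
    rw [hA, hUkE, hVkE]
    calc (U * Matrix.fromBlocks Sk 0 0 Sb * Vᵀ)ᵀ * (U * E₁)
        = V * ((Matrix.fromBlocks Sk 0 0 Sb)ᵀ * (Uᵀ * (U * E₁))) := by
          simp only [Matrix.transpose_mul, Matrix.transpose_transpose, Matrix.mul_assoc]
      _ = V * (E₂ * Sk) := by rw [hUtU, hSE]
      _ = V * E₂ * Sk := by rw [Matrix.mul_assoc]
  have hKgUk : Kg * Uk = A * (C * (Vk * Sk)) := by
    rw [hKg, Matrix.mul_assoc (A * C), hAtUk, Matrix.mul_assoc]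
  have hUkKg : Ukᵀ * Kg = Sk * (Vkᵀ * (C * Aᵀ)) := by
    have h := congrArg Matrix.transpose hKgUk
    simp only [Matrix.transpose_mul, Matrix.transpose_transpose, hKgt, hCt, hSkt,
      Matrix.mul_assoc] at h
    exact h
  have hG : Ukᵀ * Kg * Uk = Sk * (Vkᵀ * C * Vk) * Sk := by
    rw [hUkKg]
    simp only [Matrix.mul_assoc]
    rw [hAtUk]
  -- invertibility of Sk via the rank hypothesis
  have hσ : ∀ i : Fin k, σ ((i : ℕ) + 1) ≠ 0 := by
    intro i hzero
    have hjk : (i : ℕ) < k := i.isLt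
    have hσzero : ∀ l, (i : ℕ) + 1 ≤ l → σ l = 0 := fun l hl =>
      le_antisymm (hzero ▸ hσmono _ _ hl) (hσnn l)
    set S := Matrix.fromBlocks Sk 0 0 Sb with hS
    set E : Matrix (Fin k ⊕ Fin m') (Fin (i : ℕ)) ℝ :=
      Matrix.of (fun a t => if a = Sum.inl (Fin.castLE hjk.le t) then (1:ℝ) else 0) with hEdef
    set F : Matrix (Fin (i : ℕ)) (Fin k ⊕ Fin n') ℝ :=
      Matrix.of (fun t c => S (Sum.inl (Fin.castLE hjk.le t)) c) with hFdef
    have hSEF : S = E * F := by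
      ext a c
      cases a with
      | inl p =>
        rw [Matrix.mul_apply]
        by_cases hp : (p : ℕ) < (i : ℕ)
        · rw [Finset.sum_eq_single (⟨(p : ℕ), hp⟩ : Fin (i : ℕ))]
          · have hcast : Fin.castLE hjk.le (⟨(p : ℕ), hp⟩ : Fin (i : ℕ)) = p := by
              apply Fin.ext; rfl
            simp [hEdef, hFdef, hcast]
          · intro t _ ht
            have hne : Sum.inl (α := Fin k) (β := Fin m') p
                ≠ Sum.inl (Fin.castLE hjk.le t) := by
              simp only [ne_eq, Sum.inl.injEq]
              intro hh
              apply ht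
              apply Fin.ext
              simpa using congrArg Fin.val hh.symm
            simp [hEdef, hne]
          · intro h; exact absurd (Finset.mem_univ _) h
        · rw [Finset.sum_eq_zero]
          · cases c with
            | inl q =>
              have hz : σ ((p : ℕ) + 1) = 0 := hσzero _ (by omega)
              simp [hS, hSk, Matrix.diagonal_apply, hz]
            | inr q => simp [hS]
          · intro t _
            have hne : Sum.inl (α := Fin k) (β := Fin m') p
                ≠ Sum.inl (Fin.castLE hjk.le t) := by
              simp only [ne_eq, Sum.inl.injEq]
              intro hh
              apply hp
              have := congrArg Fin.val hh
              simp at this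
              omega
            simp [hEdef, hne]
      | inr r =>
        rw [Matrix.mul_apply, Finset.sum_eq_zero (fun t _ => by simp [hEdef])]
        cases c with
        | inl q => simp [hS]
        | inr q =>
          have hz : σ (k + (r : ℕ) + 1) = 0 := hσzero _ (by omega)
          simp [hS, hSb, hz]
    have hr1 : A.rank ≤ S.rank :=
      calc A.rank = (U * S * Vᵀ).rank := by rw [hA]
        _ ≤ (U * S).rank := Matrix.rank_mul_le_left _ _
        _ ≤ S.rank := Matrix.rank_mul_le_right _ _
    have hr2 : S.rank ≤ (i : ℕ) :=
      calc S.rank = (E * F).rank := by rw [hSEF]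
        _ ≤ E.rank := Matrix.rank_mul_le_left _ _
        _ ≤ Fintype.card (Fin (i : ℕ)) := Matrix.rank_le_card_width _
        _ = (i : ℕ) := Fintype.card_fin _
    omega
  have hSkdet : IsUnit Sk.det := by
    rw [hSk, Matrix.det_diagonal]
    exact isUnit_iff_ne_zero.mpr (Finset.prod_ne_zero_iff.mpr fun i _ => hσ i)
  have hGdet : IsUnit (Ukᵀ * Kg * Uk).det := by
    rw [hG, Matrix.det_mul, Matrix.det_mul]
    exact (hSkdet.mul hCVk).mul hSkdet
  have hGinv : (Ukᵀ * Kg * Uk)⁻¹ = Sk⁻¹ * ((Vkᵀ * C * Vk)⁻¹ * Sk⁻¹) := by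
    rw [hG, Matrix.mul_inv_rev, Matrix.mul_inv_rev]
  -- trace equality
  have htr : (Sk * Sk * (Ukᵀ * Kg * Uk)⁻¹).trace = ((Vkᵀ * C * Vk)⁻¹).trace := by
    rw [hGinv]
    have e1 : Sk * Sk * (Sk⁻¹ * ((Vkᵀ * C * Vk)⁻¹ * Sk⁻¹))
        = Sk * ((Vkᵀ * C * Vk)⁻¹ * Sk⁻¹) := by
      rw [Matrix.mul_assoc Sk Sk, ← Matrix.mul_assoc Sk Sk⁻¹,
        Matrix.mul_nonsing_inv _ hSkdet, Matrix.one_mul]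
    rw [e1, Matrix.trace_mul_comm, Matrix.mul_assoc, Matrix.nonsing_inv_mul _ hSkdet,
      Matrix.mul_one]
  -- square roots
  set B := psdSqrt hKgpsd with hB
  have hBt : Bᵀ = B := by
    rw [← Matrix.conjTranspose_eq_transpose_of_trivial]; exact psdSqrt_transpose hKgpsd
  have hBB : B * B = Kg := psdSqrt_mul_self hKgpsd
  set D := psdSqrt hC with hD
  have hDt : Dᵀ = D := by
    rw [← Matrix.conjTranspose_eq_transpose_of_trivial]; exact psdSqrt_transpose hC
  have hDD : D * D = C := psdSqrt_mul_self hC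
  -- gram matrices
  have hGram1 : (B * Uk)ᵀ * (B * Uk) = Ukᵀ * Kg * Uk := by
    rw [transpose_mul, hBt, Matrix.mul_assoc, ← Matrix.mul_assoc B B, hBB,
      ← Matrix.mul_assoc]
  have hGram2 : (D * Vk)ᵀ * (D * Vk) = Vkᵀ * C * Vk := by
    rw [transpose_mul, hDt, Matrix.mul_assoc, ← Matrix.mul_assoc D D, hDD,
      ← Matrix.mul_assoc]
  -- Frobenius norm equality
  have hfrob : frob ((1 - proj (B * Uk)) * B) = frob ((1 - proj (D * Vk)) * (D * Aᵀ)) := by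
    rw [frob_eq_sqrt_trace, frob_eq_sqrt_trace]
    congr 1
    rw [proj_trace _ (by rw [hGram1]; exact hGdet) B,
      proj_trace _ (by rw [hGram2]; exact hCVk) (D * Aᵀ)]
    have hc1 : Bᵀ * (B * Uk) = A * (C * (Vk * Sk)) := by
      rw [hBt, ← Matrix.mul_assoc, hBB, hKgUk]
    have hc2 : (B * Uk)ᵀ * B = Sk * (Vkᵀ * (C * Aᵀ)) := by
      rw [transpose_mul, hBt, Matrix.mul_assoc, hBB, hUkKg]
    have hc3 : (D * Aᵀ)ᵀ * (D * Vk) = A * (C * Vk) := by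
      rw [transpose_mul, transpose_transpose, hDt, Matrix.mul_assoc,
        ← Matrix.mul_assoc D D, hDD]
    have hc4 : (D * Vk)ᵀ * (D * Aᵀ) = Vkᵀ * (C * Aᵀ) := by
      rw [transpose_mul, hDt, Matrix.mul_assoc, ← Matrix.mul_assoc D D, hDD]
    have ht1 : (Bᵀ * B).trace = ((D * Aᵀ)ᵀ * (D * Aᵀ)).trace := by
      rw [hBt, hBB, transpose_mul, transpose_transpose, hDt, Matrix.mul_assoc,
        ← Matrix.mul_assoc D D, hDD, ← Matrix.mul_assoc, ← hKg]
    have cancel1 : ∀ X : Matrix (Fin k) (Fin k ⊕ Fin m') ℝ, Sk⁻¹ * (Sk * X) = X := by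
      intro X; rw [← Matrix.mul_assoc, Matrix.nonsing_inv_mul _ hSkdet, Matrix.one_mul]
    have cancel2 : ∀ X : Matrix (Fin k) (Fin k ⊕ Fin m') ℝ, Sk * (Sk⁻¹ * X) = X := by
      intro X; rw [← Matrix.mul_assoc, Matrix.mul_nonsing_inv _ hSkdet, Matrix.one_mul]
    have ht2 : (Bᵀ * (B * Uk) * ((B * Uk)ᵀ * (B * Uk))⁻¹ * ((B * Uk)ᵀ * B)).trace
        = ((D * Aᵀ)ᵀ * (D * Vk) * ((D * Vk)ᵀ * (D * Vk))⁻¹ * ((D * Vk)ᵀ * (D * Aᵀ))).trace := by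
      rw [hc1, hc2, hc3, hc4, hGram1, hGram2, hGinv]
      congr 1
      simp only [Matrix.mul_assoc]
      rw [cancel1, cancel2]
    rw [ht1, ht2]
  rw [hfrob, htr]
end

section
/- Let A ∈ ℝ^{m×n} with SVD A = U Σ Vᵀ and let Z ∈ ℝ^{m×ℓ} be a full column rank matrix with ℓ ≤ rank(A). Set Z_k = U_kᵀ Z ∈ ℝ^{k×ℓ} and Z̄_k = Ū_kᵀ Z ∈ ℝ^{(m−k)×ℓ}. For any integer k ≤ ℓ, if rank(Z_k) = k, then U_kᵀ (I_m − π(Z)) U_k ≼ T_kᵀ T_k in the Loewner (positive semi-definite) order, where T_k = Z̄_k Z_k⁺ ∈ ℝ^{(m−k)×k}. -/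
open MeasureTheory ProbabilityTheory Matrix

lemma aux_isUnit_of_rank_eq_card {ι : Type*} [Fintype ι] [DecidableEq ι]
    (M : Matrix ι ι ℝ) (h : M.rank = Fintype.card ι) : IsUnit M := by
  rw [← Matrix.mulVec_surjective_iff_isUnit]
  have hrk : M.rank = Module.finrank ℝ (LinearMap.range M.mulVecLin) := rfl
  have hr : LinearMap.range M.mulVecLin = ⊤ := by
    apply Submodule.eq_top_of_finrank_eq
    rw [← hrk, h, Module.finrank_fintype_fun_eq_card]
  intro y
  obtain ⟨x, hx⟩ := (LinearMap.range_eq_top.mp hr) y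
  exact ⟨x, hx⟩

lemma aux_posDef_of_posSemidef_isUnit {ι : Type*} [Fintype ι] [DecidableEq ι]
    {M : Matrix ι ι ℝ} (hpsd : M.PosSemidef) (hu : IsUnit M) : M.PosDef := by
  refine ⟨hpsd.1, fun x hx => lt_of_le_of_ne (hpsd.2 x) fun h => hx ?_⟩
  have h0 : M *ᵥ x = 0 :=
    (hpsd.dotProduct_mulVec_zero_iff x).mp (by
      simpa [dotProduct, mulVec, Finsupp.sum_fintype, Finset.mul_sum, mul_assoc] using h.symm)
  have hinj := Matrix.mulVec_injective_iff_isUnit.mpr hu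
  exact Finsupp.coe_eq_zero.mp (hinj (h0.trans (Matrix.mulVec_zero M).symm))

theorem stmt_8
    (k m' n' : ℕ)
    (U : Matrix (Fin k ⊕ Fin m') (Fin k ⊕ Fin m') ℝ)
    (V : Matrix (Fin k ⊕ Fin n') (Fin k ⊕ Fin n') ℝ)
    (σ : ℕ → ℝ)
    (hU : Uᵀ * U = 1) (hV : Vᵀ * V = 1)
    (hσmono : ∀ i j : ℕ, i ≤ j → σ j ≤ σ i) (hσnn : ∀ i, 0 ≤ σ i)
    (Sk : Matrix (Fin k) (Fin k) ℝ)
    (hSk : Sk = Matrix.diagonal fun i : Fin k => σ ((i : ℕ) + 1))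
    (Sb : Matrix (Fin m') (Fin n') ℝ)
    (hSb : Sb = Matrix.of fun (i : Fin m') (j : Fin n') => if (i : ℕ) = (j : ℕ) then σ (k + (i : ℕ) + 1) else 0)
    (A : Matrix (Fin k ⊕ Fin m') (Fin k ⊕ Fin n') ℝ)
    (hA : A = U * Matrix.fromBlocks Sk 0 0 Sb * Vᵀ)
    (Uk : Matrix (Fin k ⊕ Fin m') (Fin k) ℝ) (hUk : Uk = U.submatrix id Sum.inl)
    (Ub : Matrix (Fin k ⊕ Fin m') (Fin m') ℝ) (hUb : Ub = U.submatrix id Sum.inr)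
    (Vk : Matrix (Fin k ⊕ Fin n') (Fin k) ℝ) (hVk : Vk = V.submatrix id Sum.inl)
    (Vb : Matrix (Fin k ⊕ Fin n') (Fin n') ℝ) (hVb : Vb = V.submatrix id Sum.inr)
    (ℓ : ℕ) (Z : Matrix (Fin k ⊕ Fin m') (Fin ℓ) ℝ) (hZfull : Z.rank = ℓ)
    (hrank : ℓ ≤ A.rank) (hkℓ : k ≤ ℓ)
    (Zk : Matrix (Fin k) (Fin ℓ) ℝ) (hZk : Zk = Ukᵀ * Z)
    (Zb : Matrix (Fin m') (Fin ℓ) ℝ) (hZb : Zb = Ubᵀ * Z)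
    (hZkrank : Zk.rank = k)
    (Tk : Matrix (Fin m') (Fin k) ℝ) (hTk : Tk = Zb * rpinv Zk) :
    (Tkᵀ * Tk - Ukᵀ * (1 - proj Z) * Uk).PosSemidef := by

  have hconjT : ∀ {a b : Type} [Fintype a] [Fintype b] (M : Matrix a b ℝ), Mᴴ = Mᵀ := by
    intro a b _ _ M; ext i j; simp [Matrix.conjTranspose_apply]
  -- invertibility of the Gram matrices
  have hZZu : IsUnit (Zᵀ * Z) := aux_isUnit_of_rank_eq_card _ (by
    rw [Matrix.rank_transpose_mul_self, hZfull, Fintype.card_fin])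
  have hZku : IsUnit (Zk * Zkᵀ) := aux_isUnit_of_rank_eq_card _ (by
    rw [Matrix.rank_self_mul_transpose, hZkrank, Fintype.card_fin])
  set Q := (Zᵀ * Z)⁻¹ with hQdef
  set Rm := (Zk * Zkᵀ)⁻¹ with hRdef
  have hQ1 : (Zᵀ * Z) * Q = 1 := Matrix.mul_nonsing_inv _ ((Matrix.isUnit_iff_isUnit_det _).mp hZZu)
  have hQ2 : Q * (Zᵀ * Z) = 1 := Matrix.nonsing_inv_mul _ ((Matrix.isUnit_iff_isUnit_det _).mp hZZu)
  have hR1 : (Zk * Zkᵀ) * Rm = 1 := Matrix.mul_nonsing_inv _ ((Matrix.isUnit_iff_isUnit_det _).mp hZku)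
  have hR2 : Rm * (Zk * Zkᵀ) = 1 := Matrix.nonsing_inv_mul _ ((Matrix.isUnit_iff_isUnit_det _).mp hZku)
  have hQsymm : Qᵀ = Q := by
    rw [hQdef, Matrix.transpose_nonsing_inv, Matrix.transpose_mul, Matrix.transpose_transpose]
  have hRsymm : Rmᵀ = Rm := by
    rw [hRdef, Matrix.transpose_nonsing_inv, Matrix.transpose_mul, Matrix.transpose_transpose]
  -- orthogonality facts
  have hUUT : U * Uᵀ = 1 := mul_eq_one_comm.mp hU
  have hUkUk : Ukᵀ * Uk = 1 := by
    ext i j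
    have h := congrFun (congrFun hU (Sum.inl i)) (Sum.inl j)
    simp only [Matrix.mul_apply, Matrix.transpose_apply, Matrix.one_apply, Sum.inl.injEq] at h
    simpa [hUk, Matrix.mul_apply, Matrix.one_apply] using h
  have hblocks : Uk * Ukᵀ + Ub * Ubᵀ = 1 := by
    ext i j
    have h := congrFun (congrFun hUUT i) j
    simp only [Matrix.mul_apply, Matrix.transpose_apply] at h
    rw [Fintype.sum_sum_type] at h
    simpa [hUk, hUb, Matrix.mul_apply, Matrix.add_apply] using h
  have hZZsum : Zᵀ * Z = Zkᵀ * Zk + Zbᵀ * Zb := by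
    have h1 : Zᵀ * Z = Zᵀ * ((Uk * Ukᵀ + Ub * Ubᵀ) * Z) := by rw [hblocks, Matrix.one_mul]
    rw [h1, hZk, hZb]
    simp only [Matrix.transpose_mul, Matrix.transpose_transpose, Matrix.add_mul, Matrix.mul_add,
      Matrix.mul_assoc]
  set W := Z * (Zkᵀ * Rm) with hW
  have hTk' : Tk = Zb * (Zkᵀ * Rm) := by
    rw [hTk]; simp only [rpinv]; rfl
  have hproj : proj Z = Z * Q * Zᵀ := by
    simp only [proj]; rfl
  have hWU : Ukᵀ * W = 1 := by
    rw [hW, ← Matrix.mul_assoc, ← hZk, ← Matrix.mul_assoc, hR1]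
  have hWUT : Wᵀ * Uk = 1 := by
    have h := congrArg Matrix.transpose hWU
    rwa [Matrix.transpose_mul, Matrix.transpose_transpose, Matrix.transpose_one] at h
  have hPW : Z * Q * Zᵀ * W = W := by
    rw [hW]
    have h : Z * Q * Zᵀ * (Z * (Zkᵀ * Rm)) = Z * ((Q * (Zᵀ * Z)) * (Zkᵀ * Rm)) := by
      simp only [Matrix.mul_assoc]
    rw [h, hQ2, Matrix.one_mul]
  have hPsymm : (Z * Q * Zᵀ)ᵀ = Z * Q * Zᵀ := by
    simp only [Matrix.transpose_mul, Matrix.transpose_transpose, hQsymm, Matrix.mul_assoc]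
  have hWP : Wᵀ * (Z * Q * Zᵀ) = Wᵀ := by
    have h := congrArg Matrix.transpose hPW
    rwa [Matrix.transpose_mul, hPsymm] at h
  have hWW : Wᵀ * W = 1 + Tkᵀ * Tk := by
    have t1 : Rm * (Zk * (Zkᵀ * (Zk * (Zkᵀ * Rm)))) = 1 := by
      have h : Rm * (Zk * (Zkᵀ * (Zk * (Zkᵀ * Rm)))) = (Rm * (Zk * Zkᵀ)) * ((Zk * Zkᵀ) * Rm) := by
        simp only [Matrix.mul_assoc]
      rw [h, hR2, Matrix.one_mul, hR1]
    have t2 : Rm * (Zk * (Zbᵀ * (Zb * (Zkᵀ * Rm)))) = Tkᵀ * Tk := by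
      rw [hTk']
      simp only [Matrix.transpose_mul, Matrix.transpose_transpose, hRsymm, Matrix.mul_assoc]
    have h0 : Wᵀ * W = Rm * (Zk * (Zᵀ * (Z * (Zkᵀ * Rm)))) := by
      rw [hW]
      simp only [Matrix.transpose_mul, Matrix.transpose_transpose, hRsymm, Matrix.mul_assoc]
    rw [h0, show Zᵀ * (Z * (Zkᵀ * Rm)) = (Zᵀ * Z) * (Zkᵀ * Rm) from (Matrix.mul_assoc _ _ _).symm,
      hZZsum, Matrix.add_mul, Matrix.mul_add, Matrix.mul_add]
    simp only [Matrix.mul_assoc]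
    rw [t1, t2]
  have e4 : Wᵀ * (Z * Q * Zᵀ * Uk) = 1 := by
    rw [← Matrix.mul_assoc, hWP, hWUT]
  have h1 : Ukᵀ * (1 - proj Z) * Uk = 1 - Ukᵀ * (proj Z * Uk) := by
    rw [Matrix.mul_sub, Matrix.mul_one, Matrix.sub_mul, hUkUk, Matrix.mul_assoc]
  have e1 : (Zᵀ * (Uk - W))ᵀ * Q * (Zᵀ * (Uk - W))
      = (Uk - W)ᵀ * (Z * Q * Zᵀ * (Uk - W)) := by
    rw [Matrix.transpose_mul, Matrix.transpose_transpose]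
    simp only [Matrix.mul_assoc]
  have e2 : Z * Q * Zᵀ * (Uk - W) = Z * Q * Zᵀ * Uk - W := by
    rw [Matrix.mul_sub, hPW]
  have e3 : (Uk - W)ᵀ * (Z * Q * Zᵀ * Uk - W)
      = Ukᵀ * (Z * Q * Zᵀ * Uk) - Ukᵀ * W - (Wᵀ * (Z * Q * Zᵀ * Uk) - Wᵀ * W) := by
    rw [Matrix.transpose_sub, Matrix.sub_mul, Matrix.mul_sub, Matrix.mul_sub]
  have key : Tkᵀ * Tk - Ukᵀ * (1 - proj Z) * Uk
      = (Zᵀ * (Uk - W))ᵀ * Q * (Zᵀ * (Uk - W)) := by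
    rw [h1, hproj, e1, e2, e3, hWU, e4, hWW]
    abel
  rw [key]
  -- positive semidefiniteness
  have hpsdZZ : (Zᵀ * Z).PosSemidef := by
    have h := Matrix.posSemidef_conjTranspose_mul_self Z
    rwa [hconjT] at h
  have hQpsd : Q.PosSemidef := by
    rw [hQdef]
    exact (aux_posDef_of_posSemidef_isUnit hpsdZZ hZZu).inv.posSemidef
  have h := hQpsd.conjTranspose_mul_mul_same (Zᵀ * (Uk - W))
  rwa [hconjT] at h
end

section
/- Let A ∈ ℝ^{m×n} with SVD A = U Σ Vᵀ and let Z ∈ ℝ^{m×ℓ} be a full column rank matrix with ℓ ≤ rank(A). Set Z_k = U_kᵀ Z ∈ ℝ^{k×ℓ} and Z̄_k = Ū_kᵀ Z ∈ ℝ^{(m−k)×ℓ}. For any integer k ≤ ℓ, if rank(Z_k) = k, then ‖(I_m − π(Z)) A‖_F² ≤ ‖Σ̄_k‖_F² + ‖Z̄_k Z_k⁺ Σ_k‖_F². -/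
open MeasureTheory ProbabilityTheory Matrix

noncomputable def fsq {α β : Type*} [Fintype α] [Fintype β] (M : Matrix α β ℝ) : ℝ :=
  ∑ i, ∑ j, M i j ^ 2

lemma fsq_nonneg {α β : Type*} [Fintype α] [Fintype β] (M : Matrix α β ℝ) : 0 ≤ fsq M :=
  Finset.sum_nonneg fun _ _ => Finset.sum_nonneg fun _ _ => sq_nonneg _

lemma frob_sq {α β : Type*} [Fintype α] [Fintype β] (M : Matrix α β ℝ) :
    frob M ^ 2 = fsq M :=
  Real.sq_sqrt (fsq_nonneg M)

lemma fsq_eq_trace {α β : Type*} [Fintype α] [Fintype β] (M : Matrix α β ℝ) :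
    fsq M = (Mᵀ * M).trace := by
  simp only [fsq, Matrix.trace, Matrix.diag_apply, Matrix.mul_apply, Matrix.transpose_apply, sq]
  exact Finset.sum_comm

lemma fsq_add_of_ortho {α β : Type*} [Fintype α] [Fintype β] (X Y : Matrix α β ℝ)
    (h : Xᵀ * Y = 0) : fsq (X + Y) = fsq X + fsq Y := by
  have hc : ∑ j, ∑ i, X i j * Y i j = 0 := by
    have h2 := congrArg Matrix.trace h
    simpa [Matrix.trace, Matrix.diag_apply, Matrix.mul_apply, Matrix.transpose_apply] using h2
  have hc' : ∑ i, ∑ j, X i j * Y i j = 0 := by rw [Finset.sum_comm]; exact hc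
  simp only [fsq, Matrix.add_apply]
  have expand : ∀ i, ∑ j, (X i j + Y i j) ^ 2
      = (∑ j, X i j ^ 2) + (∑ j, Y i j ^ 2) + 2 * ∑ j, X i j * Y i j := by
    intro i
    rw [← Finset.sum_add_distrib, Finset.mul_sum, ← Finset.sum_add_distrib]
    exact Finset.sum_congr rfl fun j _ => by ring
  simp_rw [expand]
  rw [Finset.sum_add_distrib, ← Finset.mul_sum, hc', mul_zero, add_zero,
    Finset.sum_add_distrib]

lemma fsq_mul_left {α β γ : Type*} [Fintype α] [Fintype β] [Fintype γ] [DecidableEq β]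
    (U : Matrix α β ℝ) (M : Matrix β γ ℝ) (hU : Uᵀ * U = 1) : fsq (U * M) = fsq M := by
  rw [fsq_eq_trace, fsq_eq_trace, Matrix.transpose_mul]
  rw [show Mᵀ * Uᵀ * (U * M) = Mᵀ * (Uᵀ * U) * M by
    rw [Matrix.mul_assoc, Matrix.mul_assoc, Matrix.mul_assoc], hU, Matrix.mul_one]

lemma fsq_mul_right {α β γ : Type*} [Fintype α] [Fintype β] [Fintype γ] [DecidableEq β]
    (M : Matrix α β ℝ) (V : Matrix γ β ℝ) (hV : Vᵀ * V = 1) : fsq (M * Vᵀ) = fsq M := by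
  rw [fsq_eq_trace, fsq_eq_trace, Matrix.transpose_mul, Matrix.transpose_transpose]
  rw [show V * Mᵀ * (M * Vᵀ) = V * (Mᵀ * M * Vᵀ) by
    rw [Matrix.mul_assoc, Matrix.mul_assoc], Matrix.trace_mul_comm,
    Matrix.mul_assoc, hV, Matrix.mul_one]

lemma fsq_fromRows {α α' β : Type*} [Fintype α] [Fintype α'] [Fintype β]
    (X : Matrix α β ℝ) (Y : Matrix α' β ℝ) : fsq (Matrix.fromRows X Y) = fsq X + fsq Y := by
  simp [fsq, Fintype.sum_sum_type, Matrix.fromRows_apply_inl, Matrix.fromRows_apply_inr]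

lemma fsq_fromColumns {α β β' : Type*} [Fintype α] [Fintype β] [Fintype β']
    (X : Matrix α β ℝ) (Y : Matrix α β' ℝ) :
    fsq (Matrix.fromCols X Y) = fsq X + fsq Y := by
  simp [fsq, Fintype.sum_sum_type, Matrix.fromCols_apply_inl, Matrix.fromCols_apply_inr, Finset.sum_add_distrib]

lemma fsq_neg {α β : Type*} [Fintype α] [Fintype β] (M : Matrix α β ℝ) : fsq (-M) = fsq M := by
  simp [fsq]

lemma isUnit_det_of_rank_eq_card {p : ℕ} (B : Matrix (Fin p) (Fin p) ℝ) (h : B.rank = p) :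
    IsUnit B.det := by
  rw [isUnit_iff_ne_zero]
  intro hdet
  obtain ⟨v, hv0, hv⟩ := (Matrix.exists_mulVec_eq_zero_iff).mpr hdet
  have hker : v ∈ LinearMap.ker B.mulVecLin := by
    simpa [Matrix.mulVecLin_apply] using hv
  have hrn := LinearMap.finrank_range_add_finrank_ker B.mulVecLin
  rw [Module.finrank_fintype_fun_eq_card, Fintype.card_fin] at hrn
  have hrank : Matrix.rank B = Module.finrank ℝ (LinearMap.range B.mulVecLin) := rfl
  have hk0 : Module.finrank ℝ (LinearMap.ker B.mulVecLin) = 0 := by omega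
  rw [Submodule.finrank_eq_zero] at hk0
  rw [hk0] at hker
  simp only [Submodule.mem_bot] at hker
  exact hv0 hker

theorem stmt_9
    (k m' n' : ℕ)
    (U : Matrix (Fin k ⊕ Fin m') (Fin k ⊕ Fin m') ℝ)
    (V : Matrix (Fin k ⊕ Fin n') (Fin k ⊕ Fin n') ℝ)
    (σ : ℕ → ℝ)
    (hU : Uᵀ * U = 1) (hV : Vᵀ * V = 1)
    (hσmono : ∀ i j : ℕ, i ≤ j → σ j ≤ σ i) (hσnn : ∀ i, 0 ≤ σ i)
    (Sk : Matrix (Fin k) (Fin k) ℝ)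
    (hSk : Sk = Matrix.diagonal fun i : Fin k => σ ((i : ℕ) + 1))
    (Sb : Matrix (Fin m') (Fin n') ℝ)
    (hSb : Sb = Matrix.of fun (i : Fin m') (j : Fin n') => if (i : ℕ) = (j : ℕ) then σ (k + (i : ℕ) + 1) else 0)
    (A : Matrix (Fin k ⊕ Fin m') (Fin k ⊕ Fin n') ℝ)
    (hA : A = U * Matrix.fromBlocks Sk 0 0 Sb * Vᵀ)
    (Uk : Matrix (Fin k ⊕ Fin m') (Fin k) ℝ) (hUk : Uk = U.submatrix id Sum.inl)
    (Ub : Matrix (Fin k ⊕ Fin m') (Fin m') ℝ) (hUb : Ub = U.submatrix id Sum.inr)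
    (Vk : Matrix (Fin k ⊕ Fin n') (Fin k) ℝ) (hVk : Vk = V.submatrix id Sum.inl)
    (Vb : Matrix (Fin k ⊕ Fin n') (Fin n') ℝ) (hVb : Vb = V.submatrix id Sum.inr)
    (ℓ : ℕ) (Z : Matrix (Fin k ⊕ Fin m') (Fin ℓ) ℝ) (hZfull : Z.rank = ℓ)
    (hrank : ℓ ≤ A.rank) (hkℓ : k ≤ ℓ)
    (Zk : Matrix (Fin k) (Fin ℓ) ℝ) (hZk : Zk = Ukᵀ * Z)
    (Zb : Matrix (Fin m') (Fin ℓ) ℝ) (hZb : Zb = Ubᵀ * Z)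
    (hZkrank : Zk.rank = k) :
    frob ((1 - proj Z) * A) ^ 2 ≤ frob Sb ^ 2 + frob (Zb * rpinv Zk * Sk) ^ 2 := by
  classical
  have hGdet : IsUnit (Zᵀ * Z).det :=
    isUnit_det_of_rank_eq_card _ (by rw [Matrix.rank_transpose_mul_self, hZfull])
  have hWdet : IsUnit (Zk * Zkᵀ).det :=
    isUnit_det_of_rank_eq_card _ (by rw [Matrix.rank_self_mul_transpose, hZkrank])
  set P := proj Z with hP
  have hPZ : P * Z = Z := by
    rw [hP, proj, Matrix.mul_assoc, Matrix.mul_assoc, Matrix.nonsing_inv_mul _ hGdet,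
      Matrix.mul_one]
  have h2 : P = Z * ((Zᵀ * Z)⁻¹ * Zᵀ) := by rw [hP, proj, Matrix.mul_assoc]
  have hPP : P * P = P := by
    nth_rewrite 2 [h2]
    rw [← Matrix.mul_assoc, hPZ, ← h2]
  have hPsymm : Pᵀ = P := by
    rw [hP, proj, Matrix.transpose_mul, Matrix.transpose_mul, Matrix.transpose_transpose,
      Matrix.transpose_nonsing_inv, Matrix.transpose_mul, Matrix.transpose_transpose,
      ← Matrix.mul_assoc]
  set F := Zb * rpinv Zk with hF
  set C := rpinv Zk * (Sk * Vkᵀ) with hC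
  set Y := Z * C with hYdef
  have hPY : P * Y = Y := by rw [hYdef, ← Matrix.mul_assoc, hPZ]
  have hXD : (1 - P)ᵀ = 1 - P := by rw [Matrix.transpose_sub, Matrix.transpose_one, hPsymm]
  have h3 : (1 - P) * (P * A - Y) = 0 := by
    rw [Matrix.mul_sub, Matrix.sub_mul, Matrix.sub_mul, Matrix.one_mul, Matrix.one_mul,
      ← Matrix.mul_assoc, hPP, hPY]
    simp
  have hcross : ((1 - P) * A)ᵀ * (P * A - Y) = 0 := by
    rw [Matrix.transpose_mul, hXD, Matrix.mul_assoc, h3, Matrix.mul_zero]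
  have hsplit : (1 - P) * A + (P * A - Y) = A - Y := by
    rw [Matrix.sub_mul, Matrix.one_mul]
    abel
  have hkey : fsq ((1 - P) * A) ≤ fsq (A - Y) := by
    rw [← hsplit, fsq_add_of_ortho _ _ hcross]
    exact le_add_of_nonneg_right (fsq_nonneg _)
  have hUU : U * Uᵀ = 1 := mul_eq_one_comm.mp hU
  have hUtZ : Uᵀ * Z = Matrix.fromRows Zk Zb := by
    ext (i | i) j <;>
      simp [hZk, hZb, hUk, hUb, Matrix.mul_apply, Matrix.fromRows_apply_inl, Matrix.fromRows_apply_inr, Matrix.submatrix,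
        Matrix.transpose_apply]
  have hZdec : Z = U * Matrix.fromRows Zk Zb := by
    rw [← hUtZ, ← Matrix.mul_assoc, hUU, Matrix.one_mul]
  have hZkinv : Zk * rpinv Zk = 1 := by
    rw [rpinv, ← Matrix.mul_assoc, Matrix.mul_nonsing_inv _ hWdet]
  have hVt : Vᵀ = Matrix.fromRows Vkᵀ Vbᵀ := by
    ext (i | i) j <;>
      simp [hVk, hVb, Matrix.fromRows_apply_inl, Matrix.fromRows_apply_inr, Matrix.submatrix, Matrix.transpose_apply]
  have hAdec : A = U * Matrix.fromRows (Sk * Vkᵀ) (Sb * Vbᵀ) := by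
    rw [hA, hVt, Matrix.mul_assoc, Matrix.fromBlocks_mul_fromRows]
    simp
  have hZkC : Zk * C = Sk * Vkᵀ := by
    rw [hC, ← Matrix.mul_assoc, hZkinv, Matrix.one_mul]
  have hZbC : Zb * C = F * (Sk * Vkᵀ) := by
    rw [hC, ← Matrix.mul_assoc, ← hF]
  have hYdec : Y = U * Matrix.fromRows (Sk * Vkᵀ) (F * (Sk * Vkᵀ)) := by
    rw [hYdef, hZdec, Matrix.mul_assoc, Matrix.fromRows_mul, hZkC, hZbC]
  have hAY : A - Y = U * Matrix.fromRows (0 : Matrix (Fin k) (Fin k ⊕ Fin n') ℝ) (Sb * Vbᵀ - F * (Sk * Vkᵀ)) := by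
    rw [hAdec, hYdec, ← Matrix.mul_sub]
    congr 1
    ext (i | i) j <;> simp [Matrix.fromRows_apply_inl, Matrix.fromRows_apply_inr]
  have hW2 : Sb * Vbᵀ - F * (Sk * Vkᵀ) = Matrix.fromCols (-(F * Sk)) Sb * Vᵀ := by
    rw [hVt, Matrix.fromCols_mul_fromRows, Matrix.neg_mul, ← sub_eq_neg_add]
    simp only [hF, Matrix.mul_assoc]
  have hAYval : fsq (A - Y) = fsq (F * Sk) + fsq Sb := by
    rw [hAY, fsq_mul_left U _ hU, fsq_fromRows, hW2, fsq_mul_right _ _ hV, fsq_fromColumns,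
      fsq_neg]
    simp [fsq]
  have e1 : frob ((1 - P) * A) ^ 2 = fsq ((1 - P) * A) := frob_sq _
  have e2 : frob Sb ^ 2 = fsq Sb := frob_sq _
  have e3 : frob (Zb * rpinv Zk * Sk) ^ 2 = fsq (F * Sk) := frob_sq _
  rw [e1, e2, e3]
  linarith [hkey, hAYval]
end

section
/- Let K ∈ ℝ^{m×m} be symmetric positive semi-definite, let [U_k, Ū_k] ∈ ℝ^{m×m} be an orthogonal matrix with U_k ∈ ℝ^{m×k}, and suppose K_k := U_kᵀ K U_k is nonsingular. Then tr(Ū_kᵀ K Ū_k − Ū_kᵀ K U_k K_k⁻¹ U_kᵀ K Ū_k) = ‖(I_m − π(K^{1/2} U_k)) K^{1/2}‖_F², i.e. the Frobenius norm squared of the Schur complement square root ‖(K / K_k)^{1/2}‖_F² equals the low-rank approximation error of K^{1/2} induced by range(K^{1/2} U_k). -/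
open MeasureTheory ProbabilityTheory Matrix

/-- The square root of a positive semi-definite matrix, as defined in the older Mathlib
(`Matrix.PosSemidef.sqrt`, since removed). -/
noncomputable def Matrix.PosSemidef.sqrt {n 𝕜 : Type*} [Fintype n] [DecidableEq n] [RCLike 𝕜]
    [PartialOrder 𝕜]
    {A : Matrix n n 𝕜} (hA : A.PosSemidef) : Matrix n n 𝕜 :=
  (hA.1.eigenvectorUnitary : Matrix n n 𝕜) *
    diagonal (fun i => ((√(hA.1.eigenvalues i) : ℝ) : 𝕜)) *
    (star hA.1.eigenvectorUnitary : Matrix n n 𝕜)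

/-- Squared Frobenius norm is the trace of `Mᵀ M`. -/
lemma frob_sq_eq_trace {α β : Type*} [Fintype α] [Fintype β]
    (M : Matrix α β ℝ) : frob M ^ 2 = (Mᵀ * M).trace := by
  unfold frob
  rw [Real.sq_sqrt (by positivity)]
  simp only [Matrix.trace, Matrix.diag, Matrix.mul_apply, Matrix.transpose_apply, pow_two]
  exact Finset.sum_comm

theorem stmt_12
    (k m' : ℕ)
    (U : Matrix (Fin k ⊕ Fin m') (Fin k ⊕ Fin m') ℝ) (hU : Uᵀ * U = 1)
    (Uk : Matrix (Fin k ⊕ Fin m') (Fin k) ℝ) (hUk : Uk = U.submatrix id Sum.inl)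
    (Ub : Matrix (Fin k ⊕ Fin m') (Fin m') ℝ) (hUb : Ub = U.submatrix id Sum.inr)
    (K : Matrix (Fin k ⊕ Fin m') (Fin k ⊕ Fin m') ℝ) (hK : K.PosSemidef)
    (Kk : Matrix (Fin k) (Fin k) ℝ) (hKkdef : Kk = Ukᵀ * K * Uk)
    (hKkinv : IsUnit Kk.det)
 :
    (Ubᵀ * K * Ub - Ubᵀ * K * Uk * Kk⁻¹ * (Ukᵀ * K * Ub)).trace =
      frob ((1 - proj (hK.sqrt * Uk)) * hK.sqrt) ^ 2 := by
  set S := hK.sqrt with hSdef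
  have hSS : S * S = K := by
    have hV := Unitary.coe_star_mul_self hK.1.eigenvectorUnitary
    conv_rhs => rw [hK.1.spectral_theorem, Unitary.conjStarAlgAut_apply]
    rw [hSdef, Matrix.PosSemidef.sqrt]
    simp only [Matrix.mul_assoc]
    rw [← Matrix.mul_assoc (star _) _ (_ * _), hV, Matrix.one_mul,
      ← Matrix.mul_assoc (diagonal _) (diagonal _), diagonal_mul_diagonal]
    congr 1
    congr 1
    congr 1
    funext i
    simp [Real.mul_self_sqrt (hK.eigenvalues_nonneg i)]
  have hST : Sᵀ = S := by
    rw [← Matrix.conjTranspose_eq_transpose_of_trivial, hSdef, Matrix.PosSemidef.sqrt]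
    simp [Matrix.conjTranspose_mul, Matrix.star_eq_conjTranspose, Matrix.mul_assoc]
  have hKT : Kᵀ = K := by
    have h : K.IsSymm := by simpa using hK.isHermitian
    exact h
  have hKkT : Kkᵀ = Kk := by
    rw [hKkdef]
    simp only [Matrix.transpose_mul, Matrix.transpose_transpose, hKT, Matrix.mul_assoc]
  have hKkinvT : (Kk⁻¹)ᵀ = Kk⁻¹ := by
    rw [Matrix.transpose_nonsing_inv, hKkT]
  have hinv2 : Kk * Kk⁻¹ = 1 := Matrix.mul_nonsing_inv Kk hKkinv
  -- completeness of the orthogonal basis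
  have hUbb : Ub * Ubᵀ = 1 - Uk * Ukᵀ := by
    have h1 : U * Uᵀ = 1 := mul_eq_one_comm.mp hU
    have hsum : Uk * Ukᵀ + Ub * Ubᵀ = 1 := by
      rw [← h1]
      ext i j
      simp [hUk, hUb, Matrix.mul_apply, Fintype.sum_sum_type]
    linear_combination (norm := abel) hsum
  -- the projection matrix
  have hGram : (S * Uk)ᵀ * (S * Uk) = Kk := by
    rw [Matrix.transpose_mul, hST, hKkdef, ← hSS]
    simp only [Matrix.mul_assoc]
  set P : Matrix (Fin k ⊕ Fin m') (Fin k ⊕ Fin m') ℝ := S * Uk * Kk⁻¹ * (Ukᵀ * S)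
    with hPdef
  have hproj : proj (S * Uk) = P := by
    unfold proj
    rw [hGram, Matrix.transpose_mul, hST, hPdef]
  have hPT : Pᵀ = P := by
    rw [hPdef]
    simp only [Matrix.transpose_mul, Matrix.transpose_transpose, hST, hKkinvT,
      Matrix.mul_assoc]
  have hKk2 : Ukᵀ * (S * (S * Uk)) = Kk := by
    rw [hKkdef, ← hSS]
    simp only [Matrix.mul_assoc]
  have hPP : P * P = P := by
    rw [hPdef]
    simp only [Matrix.mul_assoc]
    rw [show Ukᵀ * (S * (S * (Uk * (Kk⁻¹ * (Ukᵀ * S))))) =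
        (Ukᵀ * (S * (S * Uk))) * (Kk⁻¹ * (Ukᵀ * S)) from by simp only [Matrix.mul_assoc],
      hKk2,
      show Kk⁻¹ * (Kk * (Kk⁻¹ * (Ukᵀ * S))) = (Kk⁻¹ * Kk) * (Kk⁻¹ * (Ukᵀ * S)) from by
        simp only [Matrix.mul_assoc],
      Matrix.nonsing_inv_mul Kk hKkinv, Matrix.one_mul]
  -- the right hand side matrix
  have hMM : ((1 - P) * S)ᵀ * ((1 - P) * S) = K - K * Uk * Kk⁻¹ * (Ukᵀ * K) := by
    have hone : (1 - P) * (1 - P) = 1 - P := by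
      rw [Matrix.sub_mul, Matrix.one_mul, Matrix.mul_sub, Matrix.mul_one, hPP]
      abel
    rw [Matrix.transpose_mul, Matrix.transpose_sub, Matrix.transpose_one, hST, hPT,
      show S * (1 - P) * ((1 - P) * S) = S * ((1 - P) * (1 - P)) * S from by
        simp only [Matrix.mul_assoc],
      hone, Matrix.mul_sub, Matrix.mul_one, Matrix.sub_mul, hSS, hPdef,
      show S * (S * Uk * Kk⁻¹ * (Ukᵀ * S)) * S = (S * S) * Uk * Kk⁻¹ * (Ukᵀ * (S * S)) from by
        simp only [Matrix.mul_assoc],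
      hSS]
  rw [hproj, frob_sq_eq_trace, hMM, Matrix.trace_sub, Matrix.trace_sub]
  -- first trace on the left
  have t1 : (Ubᵀ * K * Ub).trace = K.trace - Kk.trace := by
    rw [Matrix.trace_mul_comm (Ubᵀ * K) Ub, ← Matrix.mul_assoc, hUbb,
      Matrix.sub_mul, Matrix.one_mul, Matrix.trace_sub,
      Matrix.mul_assoc Uk Ukᵀ K, Matrix.trace_mul_comm Uk (Ukᵀ * K), ← hKkdef]
  -- second trace on the left
  have t2 : (Ubᵀ * K * Uk * Kk⁻¹ * (Ukᵀ * K * Ub)).trace =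
      (Ukᵀ * (K * (K * (Uk * Kk⁻¹)))).trace - Kk.trace := by
    rw [Matrix.trace_mul_comm (Ubᵀ * K * Uk * Kk⁻¹) (Ukᵀ * K * Ub),
      show Ukᵀ * K * Ub * (Ubᵀ * K * Uk * Kk⁻¹) =
        Ukᵀ * (K * ((Ub * Ubᵀ) * (K * (Uk * Kk⁻¹)))) from by simp only [Matrix.mul_assoc],
      hUbb, Matrix.sub_mul, Matrix.one_mul, Matrix.mul_sub, Matrix.mul_sub,
      Matrix.trace_sub]
    congr 1
    rw [show Ukᵀ * (K * (Uk * Ukᵀ * (K * (Uk * Kk⁻¹)))) =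
        (Ukᵀ * K * Uk) * ((Ukᵀ * K * Uk) * Kk⁻¹) from by simp only [Matrix.mul_assoc],
      ← hKkdef, hinv2, Matrix.mul_one]
  -- second trace on the right
  have t3 : (K * Uk * Kk⁻¹ * (Ukᵀ * K)).trace = (Ukᵀ * (K * (K * (Uk * Kk⁻¹)))).trace := by
    rw [Matrix.trace_mul_comm (K * Uk * Kk⁻¹) (Ukᵀ * K)]
    congr 1
    simp only [Matrix.mul_assoc]
  rw [t1, t2, t3]
  ring
end

section
/- Let A ∈ ℝ^{m×n} with SVD A = U Σ Vᵀ, let C ∈ ℝ^{n×n} be symmetric positive semi-definite, and let k ≤ rank(A) be such that V_kᵀ C V_k is nonsingular. Then ‖Σ̄_k · V̄_kᵀ C V_k (V_kᵀ C V_k)⁻¹‖_F² ≤ tr(Σ̄_kᵀ Σ̄_k V̄_kᵀ C V̄_k) · tr((V_kᵀ C V_k)⁻¹). -/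
open MeasureTheory ProbabilityTheory Matrix

/-- Cauchy-Schwarz for Frobenius-type sums: submultiplicativity of the squared
entrywise sum under matrix multiplication. -/
lemma frob_aux {a b c : Type*} [Fintype a] [Fintype b] [Fintype c]
    (N : Matrix a b ℝ) (Y : Matrix b c ℝ) :
    ∑ i, ∑ j, ((N * Y) i j) ^ 2 ≤ (∑ i, ∑ l, (N i l) ^ 2) * (∑ l, ∑ j, (Y l j) ^ 2) := by
  calc ∑ i, ∑ j, ((N * Y) i j) ^ 2
      ≤ ∑ i, ∑ j, (∑ l, (N i l) ^ 2) * (∑ l, (Y l j) ^ 2) := by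
        refine Finset.sum_le_sum fun i _ => Finset.sum_le_sum fun j _ => ?_
        simpa [Matrix.mul_apply] using
          Finset.sum_mul_sq_le_sq_mul_sq Finset.univ (fun l => N i l) (fun l => Y l j)
    _ = (∑ i, ∑ l, (N i l) ^ 2) * (∑ l, ∑ j, (Y l j) ^ 2) := by
        rw [Finset.sum_mul_sum]
        simp only [Finset.mul_sum, Finset.sum_mul]
        exact Finset.sum_congr rfl fun i _ => Finset.sum_comm

lemma frob_eq_trace {a b : Type*} [Fintype a] [Fintype b] (M : Matrix a b ℝ) :
    ∑ i, ∑ j, (M i j) ^ 2 = (Mᵀ * M).trace := by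
  rw [Matrix.trace, Finset.sum_comm]
  simp [Matrix.diag, Matrix.mul_apply, sq]

lemma frob_eq_trace' {a b : Type*} [Fintype a] [Fintype b] (M : Matrix a b ℝ) :
    ∑ i, ∑ j, (M i j) ^ 2 = (M * Mᵀ).trace := by
  rw [Finset.sum_comm]
  simpa using frob_eq_trace Mᵀ

theorem stmt_14
    (k m' n' : ℕ)
    (U : Matrix (Fin k ⊕ Fin m') (Fin k ⊕ Fin m') ℝ)
    (V : Matrix (Fin k ⊕ Fin n') (Fin k ⊕ Fin n') ℝ)
    (σ : ℕ → ℝ)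
    (hU : Uᵀ * U = 1) (hV : Vᵀ * V = 1)
    (hσmono : ∀ i j : ℕ, i ≤ j → σ j ≤ σ i) (hσnn : ∀ i, 0 ≤ σ i)
    (Sk : Matrix (Fin k) (Fin k) ℝ)
    (hSk : Sk = Matrix.diagonal fun i : Fin k => σ ((i : ℕ) + 1))
    (Sb : Matrix (Fin m') (Fin n') ℝ)
    (hSb : Sb = Matrix.of fun (i : Fin m') (j : Fin n') => if (i : ℕ) = (j : ℕ) then σ (k + (i : ℕ) + 1) else 0)
    (A : Matrix (Fin k ⊕ Fin m') (Fin k ⊕ Fin n') ℝ)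
    (hA : A = U * Matrix.fromBlocks Sk 0 0 Sb * Vᵀ)
    (Uk : Matrix (Fin k ⊕ Fin m') (Fin k) ℝ) (hUk : Uk = U.submatrix id Sum.inl)
    (Ub : Matrix (Fin k ⊕ Fin m') (Fin m') ℝ) (hUb : Ub = U.submatrix id Sum.inr)
    (Vk : Matrix (Fin k ⊕ Fin n') (Fin k) ℝ) (hVk : Vk = V.submatrix id Sum.inl)
    (Vb : Matrix (Fin k ⊕ Fin n') (Fin n') ℝ) (hVb : Vb = V.submatrix id Sum.inr)
    (C : Matrix (Fin k ⊕ Fin n') (Fin k ⊕ Fin n') ℝ) (hC : C.PosSemidef)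
    (hk : k ≤ A.rank) (hCVk : IsUnit (Vkᵀ * C * Vk).det) :
    frob (Sb * (Vbᵀ * C * Vk * (Vkᵀ * C * Vk)⁻¹)) ^ 2 ≤
      (Sbᵀ * Sb * (Vbᵀ * C * Vb)).trace * ((Vkᵀ * C * Vk)⁻¹).trace := by
  have hCsym : Cᵀ = C := by
    have := hC.1
    rwa [Matrix.IsHermitian, Matrix.conjTranspose_eq_transpose_of_trivial] at this
  set G := (Vkᵀ * C * Vk)⁻¹ with hG
  have hGinv : (Vkᵀ * C * Vk) * G = 1 := Matrix.mul_nonsing_inv _ hCVk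
  have hsymVCV : (Vkᵀ * C * Vk)ᵀ = Vkᵀ * C * Vk := by
    rw [Matrix.transpose_mul, Matrix.transpose_mul, Matrix.transpose_transpose, hCsym,
      Matrix.mul_assoc]
  have hGsym : Gᵀ = G := by
    rw [hG, Matrix.transpose_nonsing_inv, hsymVCV]
  set L := (open scoped MatrixOrder in CFC.sqrt C) with hLdef
  have hLsym : Lᵀ = L := by
    have := (open scoped MatrixOrder in (CFC.sqrt_nonneg C).posSemidef).1
    rwa [Matrix.IsHermitian, Matrix.conjTranspose_eq_transpose_of_trivial] at this
  have hLL : L * L = C := (open scoped MatrixOrder in CFC.sqrt_mul_sqrt_self C hC.nonneg)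
  set N := Sb * Vbᵀ * L with hN
  set Y := L * (Vk * G) with hY
  have hX : Sb * (Vbᵀ * C * Vk * G) = N * Y := by
    rw [hN, hY, ← hLL]
    simp only [Matrix.mul_assoc]
  rw [frob, Real.sq_sqrt (by positivity), hX]
  refine (frob_aux N Y).trans_eq ?_
  congr 1
  · rw [frob_eq_trace', hN]
    have : Sb * Vbᵀ * L * (Sb * Vbᵀ * L)ᵀ = Sb * (Vbᵀ * C * Vb) * Sbᵀ := by
      rw [Matrix.transpose_mul, Matrix.transpose_mul, hLsym, Matrix.transpose_transpose, ← hLL]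
      simp only [Matrix.mul_assoc]
    rw [this, Matrix.trace_mul_cycle, ← Matrix.mul_assoc]
  · rw [frob_eq_trace, hY]
    have : (L * (Vk * G))ᵀ * (L * (Vk * G)) = Gᵀ * ((Vkᵀ * C * Vk) * G) := by
      rw [Matrix.transpose_mul, Matrix.transpose_mul, hLsym, ← hLL]
      simp only [Matrix.mul_assoc]
    rw [this, hGinv, Matrix.mul_one, hGsym]
end

section
/- Let A ∈ ℝ^{m×n} with SVD A = U Σ Vᵀ, write A = A_k + Ā_k where A_k = U_k Σ_k V_kᵀ and Ā_k = Ū_k Σ̄_k V̄_kᵀ, and let Z ∈ ℝ^{m×ℓ} be any full column rank matrix. Then ‖(I_m − π(Z)) A‖_F² = ‖(I_m − π(Z)) A_k‖_F² + ‖(I_m − π(Z)) Ā_k‖_F². -/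
open MeasureTheory ProbabilityTheory Matrix

theorem stmt_15
    (k m' n' : ℕ)
    (U : Matrix (Fin k ⊕ Fin m') (Fin k ⊕ Fin m') ℝ)
    (V : Matrix (Fin k ⊕ Fin n') (Fin k ⊕ Fin n') ℝ)
    (σ : ℕ → ℝ)
    (hU : Uᵀ * U = 1) (hV : Vᵀ * V = 1)
    (hσmono : ∀ i j : ℕ, i ≤ j → σ j ≤ σ i) (hσnn : ∀ i, 0 ≤ σ i)
    (Sk : Matrix (Fin k) (Fin k) ℝ)
    (hSk : Sk = Matrix.diagonal fun i : Fin k => σ ((i : ℕ) + 1))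
    (Sb : Matrix (Fin m') (Fin n') ℝ)
    (hSb : Sb = Matrix.of fun (i : Fin m') (j : Fin n') => if (i : ℕ) = (j : ℕ) then σ (k + (i : ℕ) + 1) else 0)
    (A : Matrix (Fin k ⊕ Fin m') (Fin k ⊕ Fin n') ℝ)
    (hA : A = U * Matrix.fromBlocks Sk 0 0 Sb * Vᵀ)
    (Uk : Matrix (Fin k ⊕ Fin m') (Fin k) ℝ) (hUk : Uk = U.submatrix id Sum.inl)
    (Ub : Matrix (Fin k ⊕ Fin m') (Fin m') ℝ) (hUb : Ub = U.submatrix id Sum.inr)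
    (Vk : Matrix (Fin k ⊕ Fin n') (Fin k) ℝ) (hVk : Vk = V.submatrix id Sum.inl)
    (Vb : Matrix (Fin k ⊕ Fin n') (Fin n') ℝ) (hVb : Vb = V.submatrix id Sum.inr)
    (Ak : Matrix (Fin k ⊕ Fin m') (Fin k ⊕ Fin n') ℝ) (hAk : Ak = Uk * Sk * Vkᵀ)
    (Ab : Matrix (Fin k ⊕ Fin m') (Fin k ⊕ Fin n') ℝ) (hAb : Ab = Ub * Sb * Vbᵀ)
    (ℓ : ℕ) (Z : Matrix (Fin k ⊕ Fin m') (Fin ℓ) ℝ) (hZfull : Z.rank = ℓ) :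
    frob ((1 - proj Z) * A) ^ 2 =
      frob ((1 - proj Z) * Ak) ^ 2 + frob ((1 - proj Z) * Ab) ^ 2 := by
  have hfrob : ∀ {γ δ : Type} [Fintype γ] [Fintype δ] (M : Matrix γ δ ℝ),
      frob M ^ 2 = ∑ i, ∑ j, M i j ^ 2 := by
    intro γ δ _ _ M
    have : (0:ℝ) ≤ ∑ i, ∑ j, M i j ^ 2 := by positivity
    simp [frob, Real.sq_sqrt this]
  set B : Matrix (Fin k ⊕ Fin m') (Fin k ⊕ Fin m') ℝ := 1 - proj Z with hB
  -- orthogonality of the column blocks of V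
  have hVorth : Vkᵀ * Vb = 0 := by
    subst hVk hVb
    ext i j
    have := congrFun (congrFun hV (Sum.inl i)) (Sum.inr j)
    simpa [Matrix.mul_apply, Matrix.one_apply] using this
  -- A = Ak + Ab
  have hUeq : U = Matrix.fromCols Uk Ub := by
    subst hUk hUb; ext i (j | j) <;> rfl
  have hVeq : V = Matrix.fromCols Vk Vb := by
    subst hVk hVb; ext i (j | j) <;> rfl
  have hsplit : A = Ak + Ab := by
    rw [hA, hAk, hAb, hUeq, hVeq, Matrix.transpose_fromCols,
      Matrix.fromCols_mul_fromBlocks, Matrix.fromCols_mul_fromRows]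
    simp [Matrix.mul_assoc]
  -- cross product vanishes
  have hcross : Ak * Abᵀ = 0 := by
    rw [hAk, hAb]
    calc Uk * Sk * Vkᵀ * (Ub * Sb * Vbᵀ)ᵀ
        = Uk * Sk * ((Vkᵀ * Vb) * (Sbᵀ * Ubᵀ)) := by
          simp only [Matrix.transpose_mul, Matrix.transpose_transpose, Matrix.mul_assoc]
      _ = 0 := by rw [hVorth]; simp
  have hcross' : (B * Ak) * (B * Ab)ᵀ = 0 := by
    calc (B * Ak) * (B * Ab)ᵀ = B * (Ak * Abᵀ) * Bᵀ := by
          simp only [Matrix.transpose_mul, Matrix.mul_assoc]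
      _ = 0 := by rw [hcross]; simp
  have horth : ∑ i, ∑ j, (B * Ak) i j * (B * Ab) i j = 0 := by
    have hstep : ∀ i, ((B * Ak) * (B * Ab)ᵀ) i i = ∑ j, (B * Ak) i j * (B * Ab) i j := by
      intro i
      rw [Matrix.mul_apply]
      simp only [Matrix.transpose_apply]
    rw [show (∑ i, ∑ j, (B * Ak) i j * (B * Ab) i j)
        = ∑ i, ((B * Ak) * (B * Ab)ᵀ) i i from
      Finset.sum_congr rfl fun i _ => (hstep i).symm, hcross']
    simp
  rw [hfrob, hfrob, hfrob, hsplit, Matrix.mul_add]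
  have expand : ∀ i j, (B * Ak + B * Ab) i j ^ 2 =
      (B * Ak) i j ^ 2 + (B * Ab) i j ^ 2 + 2 * ((B * Ak) i j * (B * Ab) i j) := by
    intro i j; simp [Matrix.add_apply]; ring
  simp only [expand, Finset.sum_add_distrib, ← Finset.mul_sum]
  rw [horth]
  ring
end

section
/- Let [M, M̄] ∈ ℝ^{m×m} be an orthogonal matrix with M ∈ ℝ^{m×k}, let Z ∈ ℝ^{m×ℓ} be a matrix with k ≤ ℓ, suppose Z_k := Mᵀ Z ∈ ℝ^{k×ℓ} has full row rank k, and set Y_k = Z Z_k⁺ and T_k = (M̄ᵀ Z) Z_k⁺. Then Mᵀ (I_m − π(Y_k)) M = T_kᵀ (I_{m−k} + T_k T_kᵀ)⁻¹ T_k. -/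
open MeasureTheory ProbabilityTheory Matrix

/-! `Y = Z Z_k⁺` satisfies `Mᵀ Y = 1` and `M̄ᵀ Y = T`, so in the orthonormal frame `[M, M̄]`
its Gram matrix is `Yᵀ Y = 1 + Tᵀ T`. Compressing `1 - π(Y) = 1 - Y (Yᵀ Y)⁻¹ Yᵀ` to `range M`
therefore gives `1 - (1 + Tᵀ T)⁻¹`, which the Woodbury identity rewrites as
`Tᵀ (1 + T Tᵀ)⁻¹ T`. -/

namespace Matrix

variable {R ι κ μ : Type*}

theorem isUnit_of_rank_eq_card {K : Type*} [Field K] [Fintype ι] [DecidableEq ι]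
    {A : Matrix ι ι K} (h : A.rank = Fintype.card ι) : IsUnit A := by
  rw [← mulVec_surjective_iff_isUnit]
  refine (LinearMap.range_eq_top (f := A.mulVecLin)).mp (Submodule.eq_top_of_finrank_eq ?_)
  rw [Module.finrank_fintype_fun_eq_card, ← h]
  rfl

theorem mul_rpinv_of_rank_eq_card [Fintype ι] [Fintype κ] [DecidableEq κ] {A : Matrix κ ι ℝ}
    (h : A.rank = Fintype.card κ) : A * rpinv A = 1 := by
  have hA : IsUnit (A * Aᵀ) := isUnit_of_rank_eq_card (by rw [rank_self_mul_transpose, h])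
  rw [rpinv, ← Matrix.mul_assoc, mul_nonsing_inv _ ((isUnit_iff_isUnit_det _).mp hA)]

theorem toCols₁_transpose_mul_toCols₁ [Semiring R] [Fintype ι] [DecidableEq κ] [DecidableEq μ]
    {W : Matrix ι (κ ⊕ μ) R} (hW : Wᵀ * W = 1) : W.toCols₁ᵀ * W.toCols₁ = 1 := by
  ext i j
  simpa [mul_apply, one_apply] using congr_fun₂ hW (Sum.inl i) (Sum.inl j)

theorem toCols_mul_transpose_add [Semiring R] [Fintype κ] [Fintype μ] {W : Matrix ι (κ ⊕ μ) R} :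
    W.toCols₁ * W.toCols₁ᵀ + W.toCols₂ * W.toCols₂ᵀ = W * Wᵀ := by
  conv_rhs => rw [← fromCols_toCols W, transpose_fromCols, fromCols_mul_fromRows]

theorem transpose_mul_self_eq_of_mul_transpose_eq_one [CommSemiring R] [Fintype ι] [Fintype κ]
    [Fintype μ] [DecidableEq ι] {W : Matrix ι (κ ⊕ μ) R} (hW : W * Wᵀ = 1)
    {ν : Type*} (Y : Matrix ι ν R) :
    Yᵀ * Y = (W.toCols₁ᵀ * Y)ᵀ * (W.toCols₁ᵀ * Y) + (W.toCols₂ᵀ * Y)ᵀ * (W.toCols₂ᵀ * Y) := by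
  simp only [transpose_mul, transpose_transpose, Matrix.mul_assoc, ← Matrix.mul_add]
  simp only [← Matrix.mul_assoc, ← Matrix.add_mul]
  rw [toCols_mul_transpose_add, hW, Matrix.mul_one]

theorem transpose_mul_one_sub_proj_mul [Fintype ι] [Fintype κ] [DecidableEq ι] [DecidableEq κ]
    {A Y : Matrix ι κ ℝ} (hA : Aᵀ * A = 1) (hAY : Aᵀ * Y = 1) :
    Aᵀ * (1 - proj Y) * A = 1 - (Yᵀ * Y)⁻¹ := by
  have hYA : Yᵀ * A = 1 := by rw [← transpose_transpose A, ← transpose_mul, hAY, transpose_one]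
  rw [proj, Matrix.mul_sub, Matrix.sub_mul, Matrix.mul_one, hA]
  simp only [← Matrix.mul_assoc, hAY, Matrix.one_mul]
  rw [Matrix.mul_assoc, hYA, Matrix.mul_one]

theorem one_sub_inv_one_add_mul [CommRing R] [Fintype κ] [Fintype μ] [DecidableEq κ]
    [DecidableEq μ]     (U : Matrix κ μ R) (V : Matrix μ κ R) (h : IsUnit (1 + V * U)) :
    1 - (1 + U * V)⁻¹ = U * (1 + V * U)⁻¹ * V := by
  have := add_mul_mul_inv_eq_sub 1 U 1 V isUnit_one isUnit_one (by simpa using h)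
  simp only [inv_one, Matrix.mul_one, Matrix.one_mul] at this
  rw [this, sub_sub_cancel]

theorem isUnit_one_add_mul_transpose [Fintype κ] [Fintype μ] [DecidableEq κ] (T : Matrix κ μ ℝ) :
    IsUnit (1 + T * Tᵀ) := by
  have hT := posSemidef_self_mul_conjTranspose T
  rw [conjTranspose_eq_transpose_of_trivial] at hT
  exact (PosDef.one.add_posSemidef hT).isUnit

end Matrix

theorem stmt_17_general
    (k m' ℓ : ℕ)
    (W : Matrix (Fin k ⊕ Fin m') (Fin k ⊕ Fin m') ℝ) (hW : Wᵀ * W = 1)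
    (M : Matrix (Fin k ⊕ Fin m') (Fin k) ℝ) (hM : M = W.submatrix id Sum.inl)
    (Mb : Matrix (Fin k ⊕ Fin m') (Fin m') ℝ) (hMb : Mb = W.submatrix id Sum.inr)
    (Z : Matrix (Fin k ⊕ Fin m') (Fin ℓ) ℝ)
    (Zk : Matrix (Fin k) (Fin ℓ) ℝ) (hZk : Zk = Mᵀ * Z) (hZkrank : Zk.rank = k)
    (Yk : Matrix (Fin k ⊕ Fin m') (Fin k) ℝ) (hYk : Yk = Z * rpinv Zk)
    (Tk : Matrix (Fin m') (Fin k) ℝ) (hTk : Tk = Mbᵀ * Z * rpinv Zk) :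
    Mᵀ * (1 - proj Yk) * M = Tkᵀ * (1 + Tk * Tkᵀ)⁻¹ * Tk := by
  replace hM : M = W.toCols₁ := hM
  replace hMb : Mb = W.toCols₂ := hMb
  have hMY : Mᵀ * Yk = 1 := by
    rw [hYk, ← Matrix.mul_assoc, ← hZk, mul_rpinv_of_rank_eq_card (by simpa using hZkrank)]
  have hMbY : Mbᵀ * Yk = Tk := by rw [hYk, hTk, Matrix.mul_assoc]
  have hgram : Ykᵀ * Yk = 1 + Tkᵀ * Tk := by
    rw [transpose_mul_self_eq_of_mul_transpose_eq_one (mul_eq_one_comm.mp hW), ← hM, ← hMb,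
      hMY, hMbY, transpose_one, Matrix.one_mul]
  rw [transpose_mul_one_sub_proj_mul (hM ▸ toCols₁_transpose_mul_toCols₁ hW) hMY, hgram,
    one_sub_inv_one_add_mul _ _ (isUnit_one_add_mul_transpose Tk)]

theorem stmt_17
    (k m' ℓ : ℕ) (hkℓ : k ≤ ℓ)
    (W : Matrix (Fin k ⊕ Fin m') (Fin k ⊕ Fin m') ℝ) (hW : Wᵀ * W = 1)
    (M : Matrix (Fin k ⊕ Fin m') (Fin k) ℝ) (hM : M = W.submatrix id Sum.inl)
    (Mb : Matrix (Fin k ⊕ Fin m') (Fin m') ℝ) (hMb : Mb = W.submatrix id Sum.inr)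
    (Z : Matrix (Fin k ⊕ Fin m') (Fin ℓ) ℝ)
    (Zk : Matrix (Fin k) (Fin ℓ) ℝ) (hZk : Zk = Mᵀ * Z) (hZkrank : Zk.rank = k)
    (Yk : Matrix (Fin k ⊕ Fin m') (Fin k) ℝ) (hYk : Yk = Z * rpinv Zk)
    (Tk : Matrix (Fin m') (Fin k) ℝ) (hTk : Tk = Mbᵀ * Z * rpinv Zk) :
    Mᵀ * (1 - proj Yk) * M = Tkᵀ * (1 + Tk * Tkᵀ)⁻¹ * Tk :=
  stmt_17_general k m' ℓ W hW M hM Mb hMb Z Zk hZk hZkrank Yk hYk Tk hTk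
end
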